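/- arXiv:2407.11835 — 4 statements merged into one kernel-verified Lean document; each statement's English description precedes it below -/
import Mathlib

section
/- Let G be a finite group over ℂ, C a conjugacy class with representative r, centralizer C_G, section q with cocycle ζ, and π an irreducible representation of C_G on V_π. Then the formulas h ▷ (c ⊗ w) = (hch⁻¹) ⊗ π(ζ_c(h))w for h ∈ G, together with the grading |c ⊗ w| = c, define a G-crossed module structure on ℂC ⊗ V_π: the action is a group action and h ▷ moves the grade c to hch⁻¹. -/
/-- The formulas `h ▷ (c ⊗ w) = (hch⁻¹) ⊗ π(ζ_c(h)) w` with grading `|c ⊗ w| = c`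
define a `G`-crossed module structure on `ℂC ⊗ V_π`: the grade of `h ▷ (c ⊗ w)` is
`hch⁻¹ ∈ C`, the identity acts as the identity, and the action is multiplicative. -/
theorem stmt_3 (G : Type*) [Group G] [Fintype G] (r : G)
    (C : Set G) (hC : C = {x | IsConj r x})
    (q : G → G) (hq : ∀ c ∈ C, q c * r * (q c)⁻¹ = c) (hqr : q r = 1)
    (V : Type*) [AddCommGroup V] [Module ℂ V]
    (π : G → V →ₗ[ℂ] V)
    (hπ1 : π 1 = LinearMap.id)
    (hπmul : ∀ m n : G, m * r = r * m → n * r = r * n → π (m * n) = π m ∘ₗ π n) :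
    (∀ c ∈ C, ∀ h : G, h * c * h⁻¹ ∈ C) ∧
    (∀ c ∈ C, ∀ w : V, π ((q (1 * c * 1⁻¹))⁻¹ * 1 * q c) w = w) ∧
    (∀ c ∈ C, ∀ g h : G, ∀ w : V,
      (((g * h) * c * (g * h)⁻¹,
          π ((q ((g * h) * c * (g * h)⁻¹))⁻¹ * (g * h) * q c) w) : G × V)
        = ((g * (h * c * h⁻¹) * g⁻¹,
            π ((q (g * (h * c * h⁻¹) * g⁻¹))⁻¹ * g * q (h * c * h⁻¹))
              (π ((q (h * c * h⁻¹))⁻¹ * h * q c) w)) : G × V)) := by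
  -- membership under conjugation
  have hmem : ∀ c ∈ C, ∀ h : G, h * c * h⁻¹ ∈ C := by
    intro c hc h
    rw [hC] at hc ⊢
    exact hc.trans ⟨Units.mk h h⁻¹ (by simp) (by simp), by
      show SemiconjBy h c (h * c * h⁻¹); unfold SemiconjBy; group⟩
  -- the cocycle centralizes r
  have hcent : ∀ c ∈ C, ∀ h : G,
      ((q (h * c * h⁻¹))⁻¹ * h * q c) * r = r * ((q (h * c * h⁻¹))⁻¹ * h * q c) := by
    intro c hc h
    have h1 := hq c hc
    have h2 := hq _ (hmem c hc h)
    have e1 : q c * r = c * q c := by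
      have := congrArg (· * q c) h1; simp only [mul_assoc] at this; simpa [mul_assoc] using this
    have e2 : q (h * c * h⁻¹) * r = (h * c * h⁻¹) * q (h * c * h⁻¹) := by
      have := congrArg (· * q (h * c * h⁻¹)) h2; simp only [mul_assoc] at this; simpa [mul_assoc] using this
    have e2' : r * (q (h * c * h⁻¹))⁻¹ = (q (h * c * h⁻¹))⁻¹ * (h * c * h⁻¹) := by
      have := congrArg (fun x => (q (h * c * h⁻¹))⁻¹ * x * (q (h * c * h⁻¹))⁻¹) e2
      simpa [mul_assoc] using this
    calc (q (h * c * h⁻¹))⁻¹ * h * q c * r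
        = (q (h * c * h⁻¹))⁻¹ * h * (c * q c) := by rw [mul_assoc, e1]
      _ = (q (h * c * h⁻¹))⁻¹ * (h * c * h⁻¹) * (h * q c) := by group
      _ = r * (q (h * c * h⁻¹))⁻¹ * (h * q c) := by rw [← e2']
      _ = r * ((q (h * c * h⁻¹))⁻¹ * h * q c) := by group
  refine ⟨hmem, ?_, ?_⟩
  · intro c hc w
    have : (1 : G) * c * 1⁻¹ = c := by group
    rw [this]
    have : (q c)⁻¹ * 1 * q c = 1 := by group
    rw [this, hπ1]; rfl
  · intro c hc g h w
    have hc' := hmem c hc h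
    have key : ((g*h) * c * (g*h)⁻¹ : G) = g * (h * c * h⁻¹) * g⁻¹ := by group
    refine Prod.ext (by rw [key]) ?_
    simp only
    rw [key]
    have hsplit : (q (g * (h * c * h⁻¹) * g⁻¹))⁻¹ * (g * h) * q c
        = ((q (g * (h * c * h⁻¹) * g⁻¹))⁻¹ * g * q (h * c * h⁻¹))
          * ((q (h * c * h⁻¹))⁻¹ * h * q c) := by group
    rw [hsplit, hπmul _ _ (hcent _ hc' g) (hcent c hc h)]
    rfl
end

section
/- Let G be a finite group and suppose (·,·) is a bilinear form on {e^g : g ∈ G} satisfying the covariance conditions (e^g, e^h) = (e^{gu}, e^{hu}) − (e^{gu}, e^u) − (e^u, e^{hu}) + (e^u, e^u), conjugation invariance, e^e = 0, and the symmetry (e^g, e^h) = (e^h, e^g). Then the form is completely determined by the squared lengths l_C := (e^c, e^c) for conjugacy classes C, via (e^h, e^u) = −(1/2)(l_{[hu⁻¹]} − l_{[h]} − l_{[u]}), where [x] denotes the conjugacy class of x. -/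
theorem stmt_8_general (G : Type*) [Group G] (B : G → G → ℂ)
    (hcov : ∀ g h u : G,
      B g h = B (g * u) (h * u) - B (g * u) u - B u (h * u) + B u u)
    (hsymm : ∀ g h : G, B g h = B h g) :
    ∀ h u : G, B h u = -(1/2) * (B (h * u⁻¹) (h * u⁻¹) - B h h - B u u) := by
  intro h u
  have hpolar : B (h * u⁻¹) (h * u⁻¹) = B h h - B h u - B u h + B u u := by
    simpa only [inv_mul_cancel_right] using hcov (h * u⁻¹) (h * u⁻¹) u
  linear_combination (1/2 : ℂ) * hpolar - (1/2 : ℂ) * hsymm u h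

/-- A `D^∨(G)`-covariant, symmetric (star-compatible) bimodule inner product on the
left-invariant forms `e^g` of `ℂG` is determined by its squared lengths:
`(e^h, e^u) = -(1/2)(l_{[hu⁻¹]} - l_{[h]} - l_{[u]})` where `l_{[x]} = (e^x, e^x)`. -/
theorem stmt_8 (G : Type*) [Group G] [Fintype G] (B : G → G → ℂ)
    (hcov : ∀ g h u : G,
      B g h = B (g * u) (h * u) - B (g * u) u - B u (h * u) + B u u)
    (hconj : ∀ g h u : G, B g h = B (u⁻¹ * g * u) (u⁻¹ * h * u))
    (hB1 : ∀ h : G, B 1 h = 0) (hB1' : ∀ g : G, B g 1 = 0)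
    (hsymm : ∀ g h : G, B g h = B h g) :
    ∀ h u : G, B h u = -(1/2) * (B (h * u⁻¹) (h * u⁻¹) - B h h - B u u) :=
  stmt_8_general G B hcov hsymm
end

section
/- Let G be a finite group and L : ℂG → ℂG the linear map with L(g) = λ_{[g]} g where λ_C ∈ ℂ is constant on each conjugacy class C and λ_{[e]} = 0. Define (e^g, e^h) := −(1/2)(λ_{[gh⁻¹]} − λ_{[g]} − λ_{[h⁻¹]}). Then this form satisfies the covariance conditions (e^g, e^h) = (e^{gu}, e^{hu}) − (e^{gu}, e^u) − (e^u, e^{hu}) + (e^u, e^u) and (e^g, e^h) = (e^{u⁻¹gu}, e^{u⁻¹hu}) for all g, h, u ∈ G; moreover λ_C + λ_{C⁻¹} = 2 l_C where l_C = (e^c, e^c) for c ∈ C. Conversely, if the first covariance condition holds for this form then λ_{[e]} = 0. -/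
/-- The inner product `(e^g, e^h) := -(1/2)(λ_{[gh⁻¹]} - λ_{[g]} - λ_{[h⁻¹]})`
associated to a conjugation-invariant eigenvalue function `λ`. -/
noncomputable def covForm {G : Type*} [Group G] (lam : G → ℂ) (g h : G) : ℂ :=
  -(1/2) * (lam (g * h⁻¹) - lam g - lam h⁻¹)

/-- For `L(g) = λ_{[g]} g` with `λ` constant on conjugacy classes and `λ_{[e]} = 0`,
the form `covForm lam` satisfies the two `D^∨(G)`-covariance conditions and
`λ_C + λ_{C⁻¹} = 2 l_C`; conversely, if the first covariance condition holds then
`λ_{[e]} = 0`. -/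
theorem stmt_9 (G : Type*) [Group G] (lam : G → ℂ)
    (hconj : ∀ g k : G, lam (k⁻¹ * g * k) = lam g) :
    (lam 1 = 0 →
      (∀ g h u : G, covForm lam g h =
        covForm lam (g * u) (h * u) - covForm lam (g * u) u -
          covForm lam u (h * u) + covForm lam u u) ∧
      (∀ g h u : G, covForm lam g h = covForm lam (u⁻¹ * g * u) (u⁻¹ * h * u)) ∧
      (∀ g : G, lam g + lam g⁻¹ = 2 * covForm lam g g)) ∧
    ((∀ g h u : G, covForm lam g h =
        covForm lam (g * u) (h * u) - covForm lam (g * u) u -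
          covForm lam u (h * u) + covForm lam u u) → lam 1 = 0) := by
  have hc : ∀ g k : G, lam (k * g * k⁻¹) = lam g := by
    intro g k; simpa using hconj g k⁻¹
  constructor
  · intro h1
    refine ⟨?_, ?_, ?_⟩
    · intro g h u
      simp only [covForm, mul_inv_rev]
      have e1 : g * u * (u⁻¹ * h⁻¹) = g * h⁻¹ := by group
      have e2 : g * u * u⁻¹ = g := by group
      have e3 : u * (u⁻¹ * h⁻¹) = h⁻¹ := by group
      have e4 : u * u⁻¹ = (1 : G) := by group
      have e5 : lam (u⁻¹ * h⁻¹) = lam (h * u)⁻¹ := by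
        rw [mul_inv_rev]
      rw [e1, e2, e3, e4, h1, e5]
      ring
    · intro g h u
      simp only [covForm, mul_inv_rev]
      have e1 : u⁻¹ * g * u * (u⁻¹ * (h⁻¹ * u⁻¹⁻¹)) = u⁻¹ * (g * h⁻¹) * u := by group
      have e2 : u⁻¹ * (h⁻¹ * u⁻¹⁻¹) = u⁻¹ * h⁻¹ * u := by group
      rw [e1, e2, hconj, hconj, hconj]
    · intro g
      simp only [covForm, mul_inv_cancel, h1]
      ring
  · intro hcov
    have := hcov 1 1 1
    simp only [covForm, mul_inv_cancel, one_mul, mul_one, inv_one, mul_inv_cancel] at this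
    linear_combination 2 * this
end

section
/- Let G be a finite group, C a conjugacy class with representative r, centralizer C_G, section q with q_c r q_c⁻¹ = c, and π a one-dimensional complex representation of C_G. On the vector space with basis {E_a^b : a, b ∈ C}, the assignment E_a^b ↦ r_a^b := Σ_{n ∈ C_G} π(n) δ_{q_a n⁻¹ q_b⁻¹} ⊗ b⁻¹ ∈ ℂ(G) ⊗ ℂG is injective. -/
open Finset

/-- For a conjugacy class `C` with section `q` and a one-dimensional representation
`π` of the centralizer `C_G`, the assignment
`E_a^b ↦ r_a^b = Σ_{n ∈ C_G} π(n) δ_{q_a n⁻¹ q_b⁻¹} ⊗ b⁻¹ ∈ ℂ(G) ⊗ ℂG` is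
injective, i.e. the elements `r_a^b` for `(a,b) ∈ C × C` are linearly independent
(here `ℂ(G) ⊗ ℂG` is modelled as functions on `G × G`). -/
theorem stmt_17 (G : Type*) [Group G] [Fintype G] [DecidableEq G] (r : G)
    (C : Set G) (hC : C = {x | IsConj r x})
    (q : G → G) (hq : ∀ c ∈ C, q c * r * (q c)⁻¹ = c)
    (π : G → ℂ) (hπ1 : π 1 = 1)
    (hπmul : ∀ m n : G, m * r = r * m → n * r = r * n → π (m * n) = π m * π n) :
    LinearIndependent ℂ (fun ab : C × C => (fun p : G × G =>
      if p.2 = ((ab.2 : G))⁻¹ then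
        ∑ n ∈ univ.filter
            (fun n : G => n * r = r * n ∧ q (ab.1 : G) * n⁻¹ * (q (ab.2 : G))⁻¹ = p.1),
          π n
      else 0)) := by
  -- key: if n commutes with r and q a' * n⁻¹ = q a for a, a' ∈ C, then a' = a
  have key : ∀ a a' : G, a ∈ C → a' ∈ C → ∀ n : G, n * r = r * n →
      q a' * n⁻¹ = q a → a' = a := by
    intro a a' ha ha' n hn hqa
    have hq' : q a' = q a * n := by
      rw [← hqa, mul_assoc, inv_mul_cancel, mul_one]
    have h1 : a' = q a' * r * (q a')⁻¹ := (hq a' ha').symm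
    have h2 : a = q a * r * (q a)⁻¹ := (hq a ha).symm
    rw [h1, h2, hq', mul_inv_rev]
    have : n * r * n⁻¹ = r := by rw [hn, mul_assoc, mul_inv_cancel, mul_one]
    calc q a * n * r * (n⁻¹ * (q a)⁻¹)
        = q a * (n * r * n⁻¹) * (q a)⁻¹ := by group
      _ = q a * r * (q a)⁻¹ := by rw [this]
  rw [linearIndependent_iff']
  intro s g hsum ab hab
  have h := congrFun hsum ((q (ab.1 : G) * (q (ab.2 : G))⁻¹ : G), ((ab.2 : G))⁻¹)
  simp only [Finset.sum_apply, Pi.smul_apply, Pi.zero_apply, smul_eq_mul] at h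
  rw [Finset.sum_eq_single ab] at h
  · rw [if_pos rfl] at h
    have hfilt : univ.filter (fun n : G => n * r = r * n ∧
        q (ab.1 : G) * n⁻¹ * (q (ab.2 : G))⁻¹ = q (ab.1 : G) * (q (ab.2 : G))⁻¹) = {1} := by
      ext n
      simp only [Finset.mem_filter, Finset.mem_univ, true_and, Finset.mem_singleton]
      constructor
      · rintro ⟨-, h2⟩
        have h3 : q (ab.1 : G) * n⁻¹ = q (ab.1 : G) := mul_right_cancel h2
        have h4 : n⁻¹ = 1 := mul_left_cancel
          (show q (ab.1 : G) * n⁻¹ = q (ab.1 : G) * 1 by rw [mul_one]; exact h3)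
        exact inv_eq_one.mp h4
      · rintro rfl
        exact ⟨by rw [one_mul, mul_one], by rw [inv_one, mul_one]⟩
    rw [hfilt, Finset.sum_singleton, hπ1, mul_one] at h
    exact h
  · intro cd hcd hne
    by_cases hb : ((ab.2 : G))⁻¹ = ((cd.2 : G))⁻¹
    · have hb2 : cd.2 = ab.2 := Subtype.ext (inv_injective hb.symm)
      have ha1 : cd.1 ≠ ab.1 := by
        intro hEq
        exact hne (Prod.ext hEq hb2)
      rw [if_pos hb]
      have hfilt : univ.filter (fun n : G => n * r = r * n ∧
          q (cd.1 : G) * n⁻¹ * (q (cd.2 : G))⁻¹ = q (ab.1 : G) * (q (ab.2 : G))⁻¹) = ∅ := by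
        rw [Finset.filter_eq_empty_iff]
        rintro n - ⟨hn, h2⟩
        rw [hb2] at h2
        have h3 : q (cd.1 : G) * n⁻¹ = q (ab.1 : G) := mul_right_cancel h2
        have := key (ab.1 : G) (cd.1 : G) ab.1.2 cd.1.2 n hn h3
        exact ha1 (Subtype.ext this)
      rw [hfilt, Finset.sum_empty, mul_zero]
    · rw [if_neg (fun hh => hb hh), mul_zero]
  · intro habs
    exact absurd hab habs
end
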